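/- For any partition κ, the product over nodes (i,j) of κ of (2(a(i,j)+1)+l(i,j)) times the product of (2a(i,j)+l(i,j)+1) equals the product over nodes of the partition 2κ (obtained by doubling each part) of (a'(i,j)+l'(i,j)+1), where a, l denote arm and leg lengths in κ and a', l' denote arm and leg lengths in 2κ. Equivalently, (h_κ d'_κ)|_{α=2} = d_{2κ}|_{α=1}. -/

import Mathlib

/-- Arm length of a cell in a Young diagram: number of cells in the same row strictly
to the right. -/
def armLength (μ : YoungDiagram) (c : ℕ × ℕ) : ℕ :=
  (μ.cells.filter fun d => d.1 = c.1 ∧ c.2 < d.2).card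

/-- Leg length of a cell in a Young diagram: number of cells in the same column strictly
below. -/
def legLength (μ : YoungDiagram) (c : ℕ × ℕ) : ℕ :=
  (μ.cells.filter fun d => d.2 = c.2 ∧ c.1 < d.1).card

/-- d'_κ(α) = ∏_{(i,j)∈κ} (α(a(i,j)+1) + l(i,j)). -/
noncomputable def dPrime (α : ℚ) (μ : YoungDiagram) : ℚ :=
  ∏ c ∈ μ.cells, (α * (armLength μ c + 1) + legLength μ c)

/-- h_κ(α) = ∏_{(i,j)∈κ} (α a(i,j) + l(i,j) + 1). -/
noncomputable def hProd (α : ℚ) (μ : YoungDiagram) : ℚ :=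
  ∏ c ∈ μ.cells, (α * armLength μ c + legLength μ c + 1)

/-!
Each cell `(i, j)` of `κ` splits into the cells `(i, 2j)` and `(i, 2j + 1)` of `2κ`. Both keep the
leg length `l` of `(i, j)`, and their arm lengths are `2a + 1` and `2a`, so their hook lengths
`2(a + 1) + l` and `2a + l + 1` are exactly the two factors that `(i, j)` contributes to
`h_κ(2) d'_κ(2)`.
-/

namespace YoungDiagram

theorem armLength_eq_rowLen_sub (μ : YoungDiagram) (i j : ℕ) :
    armLength μ (i, j) = μ.rowLen i - (j + 1) := by
  have hcells : (μ.cells.filter fun d => d.1 = i ∧ j < d.2) =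
      {i} ×ˢ Finset.Ioo j (μ.rowLen i) := by
    ext ⟨a, b⟩
    simp only [Finset.mem_filter, mem_cells, Finset.mem_product, Finset.mem_singleton,
      Finset.mem_Ioo]
    constructor
    · rintro ⟨hab, rfl, hjb⟩
      exact ⟨rfl, hjb, mem_iff_lt_rowLen.mp hab⟩
    · rintro ⟨rfl, hjb, hb⟩
      exact ⟨mem_iff_lt_rowLen.mpr hb, rfl, hjb⟩
  rw [armLength, hcells, Finset.card_product, Finset.card_singleton, Nat.card_Ioo, one_mul]
  omega

theorem legLength_eq_armLength_transpose (μ : YoungDiagram) (i j : ℕ) :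
    legLength μ (i, j) = armLength μ.transpose (j, i) := by
  have hcells : μ.transpose.cells = μ.cells.map (Equiv.prodComm ℕ ℕ).toEmbedding := rfl
  rw [legLength, armLength, hcells, Finset.filter_map, Finset.card_map]
  rfl

theorem legLength_eq_colLen_sub (μ : YoungDiagram) (i j : ℕ) :
    legLength μ (i, j) = μ.colLen j - (i + 1) := by
  rw [legLength_eq_armLength_transpose, armLength_eq_rowLen_sub, rowLen_transpose]

/-- `ν` is the diagram `2μ` of the partition obtained by doubling every part of `μ`. -/
def IsDoubleOf (ν μ : YoungDiagram) : Prop :=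
  ∀ i j : ℕ, (i, j) ∈ ν ↔ j < 2 * μ.rowLen i

namespace IsDoubleOf

variable {μ ν : YoungDiagram}

theorem mem_iff (hν : ν.IsDoubleOf μ) {i j : ℕ} : (i, j) ∈ ν ↔ (i, j / 2) ∈ μ := by
  rw [hν, mem_iff_lt_rowLen]
  omega

theorem rowLen_eq (hν : ν.IsDoubleOf μ) (i : ℕ) : ν.rowLen i = 2 * μ.rowLen i :=
  eq_of_forall_lt_iff fun j => by rw [← mem_iff_lt_rowLen, hν]

theorem colLen_eq (hν : ν.IsDoubleOf μ) (j : ℕ) : ν.colLen j = μ.colLen (j / 2) :=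
  eq_of_forall_lt_iff fun i => by rw [← mem_iff_lt_colLen, ← mem_iff_lt_colLen, hν.mem_iff]

theorem armLength_two_mul (hν : ν.IsDoubleOf μ) {i j : ℕ} (hij : (i, j) ∈ μ) :
    armLength ν (i, 2 * j) = 2 * armLength μ (i, j) + 1 := by
  rw [mem_iff_lt_rowLen] at hij
  rw [armLength_eq_rowLen_sub, armLength_eq_rowLen_sub, hν.rowLen_eq]
  omega

theorem armLength_two_mul_add_one (hν : ν.IsDoubleOf μ) (i j : ℕ) :
    armLength ν (i, 2 * j + 1) = 2 * armLength μ (i, j) := by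
  rw [armLength_eq_rowLen_sub, armLength_eq_rowLen_sub, hν.rowLen_eq]
  omega

theorem legLength_eq (hν : ν.IsDoubleOf μ) (i j : ℕ) :
    legLength ν (i, j) = legLength μ (i, j / 2) := by
  rw [legLength_eq_colLen_sub, legLength_eq_colLen_sub, hν.colLen_eq]

theorem prod_cells {M : Type*} [CommMonoid M] (hν : ν.IsDoubleOf μ) (f : ℕ × ℕ → M) :
    ∏ c ∈ ν.cells, f c = ∏ c ∈ μ.cells, f (c.1, 2 * c.2) * f (c.1, 2 * c.2 + 1) := by
  have hsplit : ∏ c ∈ ν.cells, f c =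
      ∏ p ∈ μ.cells ×ˢ Finset.range 2, f (p.1.1, 2 * p.1.2 + p.2) := by
    refine Finset.prod_nbij' (fun c => ((c.1, c.2 / 2), c.2 % 2))
      (fun p => (p.1.1, 2 * p.1.2 + p.2)) ?_ ?_ ?_ ?_ ?_
    · rintro ⟨a, b⟩ hab
      simp only [mem_cells, Finset.mem_product, Finset.mem_range] at hab ⊢
      exact ⟨hν.mem_iff.mp hab, Nat.mod_lt b two_pos⟩
    · rintro ⟨⟨a, b⟩, k⟩ h
      simp only [mem_cells, Finset.mem_product, Finset.mem_range] at h ⊢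
      rw [hν.mem_iff, show (2 * b + k) / 2 = b by omega]
      exact h.1
    · rintro ⟨a, b⟩ -
      simp only [Prod.mk.injEq, true_and]
      omega
    · rintro ⟨⟨a, b⟩, k⟩ h
      simp only [Finset.mem_product, Finset.mem_range] at h
      simp only [Prod.mk.injEq, true_and]
      omega
    · rintro ⟨a, b⟩ -
      simp only [Nat.div_add_mod]
  simp [hsplit, Finset.prod_product, Finset.prod_range_succ]

end IsDoubleOf

end YoungDiagram

/-- (h_κ d'_κ)|_{α=2} = d_{2κ}|_{α=1}, where 2κ doubles each part of κ. -/
theorem hd_alpha_two_eq_d_doubled (μ ν : YoungDiagram)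
    (hν : ∀ i j : ℕ, (i, j) ∈ ν ↔ j < 2 * μ.rowLen i) :
    hProd 2 μ * dPrime 2 μ = dPrime 1 ν := by
  have hdouble : ν.IsDoubleOf μ := hν
  rw [hProd, dPrime, dPrime, ← Finset.prod_mul_distrib, hdouble.prod_cells]
  refine Finset.prod_congr rfl fun ⟨i, j⟩ hij => ?_
  have heven : 2 * j / 2 = j := by omega
  have hodd : (2 * j + 1) / 2 = j := by omega
  rw [hdouble.armLength_two_mul ((YoungDiagram.mem_cells _).mp hij),
    hdouble.armLength_two_mul_add_one, hdouble.legLength_eq, hdouble.legLength_eq, heven, hodd]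
  push_cast
  ring
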